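/- (Lemma 1, part 5.) Under the MIS/RMIS tableau setup, assume c^I_1 = 0 and that the first row of A^O is identically zero. Then (b^f × c^f)^⊺ A^{f,s} = (b^O × c^O)^⊺ A^O as row vectors in ℝ^{s^O}. -/

import Mathlib

open Matrix BigOperators Finset

/-- The increments `d_j = c^O_{j+1} - c^O_j` (with `d_{s^O} = 1 - c^O_{s^O}`). -/
noncomputable def misD (sO : ℕ) (cO : Fin sO → ℝ) (j : Fin sO) : ℝ :=
  if h : j.val + 1 < sO then cO ⟨j.val + 1, h⟩ - cO j else 1 - cO j

/-- The fast-fast GARK coefficient matrix `A^{f,f}` of the MIS/RMIS tableau. -/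
noncomputable def misAff (sI sO : ℕ) (AI : Matrix (Fin sI) (Fin sI) ℝ)
    (bI : Fin sI → ℝ) (cO : Fin sO → ℝ) :
    Matrix (Fin sO × Fin sI) (Fin sO × Fin sI) ℝ :=
  fun ip jq =>
    if jq.1 < ip.1 then misD sO cO jq.1 * bI jq.2
    else if jq.1 = ip.1 then misD sO cO ip.1 * AI ip.2 jq.2
    else 0

/-- The slow-fast GARK coefficient matrix `A^{s,f}` of the MIS/RMIS tableau. -/
noncomputable def misAsf (sI sO : ℕ) (bI : Fin sI → ℝ) (cO : Fin sO → ℝ) :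
    Matrix (Fin sO) (Fin sO × Fin sI) ℝ :=
  fun i jq => if jq.1 < i then misD sO cO jq.1 * bI jq.2 else 0

/-- The fast-slow GARK coefficient matrix `A^{f,s}` of the MIS/RMIS tableau. -/
noncomputable def misAfs (sI sO : ℕ) (cI : Fin sI → ℝ)
    (AO : Matrix (Fin sO) (Fin sO) ℝ) (bO : Fin sO → ℝ) :
    Matrix (Fin sO × Fin sI) (Fin sO) ℝ :=
  fun ip j =>
    if ip.1.val = 0 then
      (if h : 1 < sO then cI ip.2 * AO ⟨1, h⟩ j else 0)
    else if h : ip.1.val + 1 < sO then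
      AO ip.1 j + cI ip.2 * (AO ⟨ip.1.val + 1, h⟩ j - AO ip.1 j)
    else
      AO ip.1 j + cI ip.2 * (bO j - AO ip.1 j)

/-- The fast abscissae `c^f` of the MIS/RMIS tableau. -/
noncomputable def misCf (sI sO : ℕ) (cI : Fin sI → ℝ) (cO : Fin sO → ℝ) :
    Fin sO × Fin sI → ℝ :=
  fun ip => cO ip.1 + misD sO cO ip.1 * cI ip.2

/-- The RMIS fast weights `b^f` (i-th block is `b^O_i e_1`). -/
noncomputable def misBf (sI sO : ℕ) (bO : Fin sO → ℝ) : Fin sO × Fin sI → ℝ :=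
  fun ip => if ip.2.val = 0 then bO ip.1 else 0

/-- The vector `v^O` appearing in the fourth-order RMIS condition. -/
noncomputable def misV (sO : ℕ) (bO cO : Fin sO → ℝ) (i : Fin sO) : ℝ :=
  if i.val = 0 then 0
  else if h : i.val + 1 < sO then
    bO i * (cO i - cO ⟨i.val - 1, by have := i.isLt; omega⟩) +
      (cO ⟨i.val + 1, h⟩ - cO ⟨i.val - 1, by have := i.isLt; omega⟩) *
        ∑ j ∈ Finset.univ.filter (fun j => i < j), bO j
  else bO i * (cO i - cO ⟨i.val - 1, by have := i.isLt; omega⟩)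

/-! The RMIS weights `b^f` only see the first inner stage of each block. There `c^I_1 = 0`, so
`c^f` reduces to `c^O` and the `i`-th block row of `A^{f,s}` reduces to `e_iᵀ A^O` (for `i = 1`
it reduces to `0`, which is `e_1ᵀ A^O` since the first row of `A^O` vanishes). -/

theorem Matrix.vecMul_ite_snd_eq {α β γ R : Type*} [Fintype α] [Fintype β] [DecidableEq β]
    [NonUnitalNonAssocSemiring R] (b : β) (w : α → R) (M : Matrix (α × β) γ R) :
    (fun ip : α × β => if ip.2 = b then w ip.1 else 0) ᵥ* M = w ᵥ* fun i => M (i, b) := by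
  ext j
  simp [vecMul, dotProduct, Fintype.sum_prod_type, ite_mul]

theorem misBf_mul_misCf_of_cI_zero {sI sO : ℕ} (hsI : 0 < sI) {cI : Fin sI → ℝ}
    (hcI : cI ⟨0, hsI⟩ = 0) (bO cO : Fin sO → ℝ) :
    (fun ip => misBf sI sO bO ip * misCf sI sO cI cO ip)
      = fun ip => if ip.2 = ⟨0, hsI⟩ then bO ip.1 * cO ip.1 else 0 := by
  ext ⟨i, p⟩
  by_cases hp : p = ⟨0, hsI⟩
  · subst hp
    simp [misBf, misCf, hcI]
  · have hp' : p.val ≠ 0 := fun h => hp (Fin.ext h)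
    simp [misBf, hp, hp']

theorem misAfs_first_inner_stage {sI sO : ℕ} (hsI : 0 < sI) (hsO : 0 < sO)
    {cI : Fin sI → ℝ} (hcI : cI ⟨0, hsI⟩ = 0) {AO : Matrix (Fin sO) (Fin sO) ℝ}
    (hAO : ∀ j, AO ⟨0, hsO⟩ j = 0) (bO : Fin sO → ℝ) :
    (fun i => misAfs sI sO cI AO bO (i, ⟨0, hsI⟩)) = AO := by
  ext i j
  by_cases hi : i.val = 0
  · obtain rfl : i = ⟨0, hsO⟩ := Fin.ext hi
    simp [misAfs, hcI, hAO]
  · simp only [misAfs, if_neg hi]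
    split_ifs <;> simp [hcI]

/-- Lemma 1, part 5: If `c^I_1 = 0` and the first row of `A^O` is zero,
then `(b^f × c^f)ᵀ A^{f,s} = (b^O × c^O)ᵀ A^O`. -/
theorem bfcf_Afs_eq_bOcO_AO (sI sO : ℕ) (hsI : 1 ≤ sI) (hsO : 2 ≤ sO)
    (cI : Fin sI → ℝ)
    (AO : Matrix (Fin sO) (Fin sO) ℝ) (bO cO : Fin sO → ℝ)
    (hcI1 : cI ⟨0, by omega⟩ = 0)
    (hAO1 : ∀ j, AO ⟨0, by omega⟩ j = 0) :
    (fun ip => misBf sI sO bO ip * misCf sI sO cI cO ip) ᵥ* misAfs sI sO cI AO bO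
      = (fun i => bO i * cO i) ᵥ* AO := by
  rw [misBf_mul_misCf_of_cI_zero _ hcI1, Matrix.vecMul_ite_snd_eq _ (fun i => bO i * cO i),
    misAfs_first_inner_stage _ _ hcI1 hAO1]
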